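/- arXiv:1305.1240 — 5 statements merged into one kernel-verified Lean document; each statement's English description precedes it below -/
import Mathlib

section
/- Let α, β, δ > 0 with β < α and δ ≥ α. Set x₁ = 0, x₂ = β, and H(x) = −x log x − (α − x) log(α − x) − (β − x) log(β − x) − (δ − α + x) log(δ − α + x) (with 0 log 0 = 0). Then H(x₁) − H(x₂) = f_δ(α − β) − f_δ(α), where f_δ(x) = x log x + (δ − x) log(δ − x). Hence H(0) < H(β) if and only if |α − δ/2| > |α − β − δ/2|. -/
/-!
Only the two blocks `x` and `δ − α + x` change between the endpoints `x = 0` and `x = β`,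
so `H(0) − H(β) = f_δ(α − β) − f_δ(α)`. The function `f_δ` is symmetric about `δ/2` and strictly
increasing on `[δ/2, δ]` (its derivative is `log x − log (δ − x)`), so on `[0, δ]` it compares
values by their distance to `δ/2`.
-/

/-- The entropy function `H` of the four block probabilities
`x, α−x, β−x, δ−α+x` (natural log; `Real.log 0 = 0`, so `0 log 0 = 0`). -/
noncomputable def Hent (α β δ x : ℝ) : ℝ :=
  -(x * Real.log x) - ((α - x) * Real.log (α - x))
    - ((β - x) * Real.log (β - x)) - ((δ - α + x) * Real.log (δ - α + x))

open Real Set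

lemma lt_iff_abs_sub_lt_of_symm_of_strictMonoOn {f : ℝ → ℝ} {c r u v : ℝ}
    (hsymm : ∀ x, f (c - x) = f (c + x)) (hmono : StrictMonoOn f (Icc c (c + r)))
    (hu : |u - c| ≤ r) (hv : |v - c| ≤ r) :
    f u < f v ↔ |u - c| < |v - c| := by
  have fold : ∀ w, f w = f (c + |w - c|) := fun w => by
    rcases le_total c w with h | h
    · rw [abs_of_nonneg (sub_nonneg.2 h), add_sub_cancel]
    · rw [abs_of_nonpos (sub_nonpos.2 h), ← hsymm, neg_sub, sub_sub_cancel]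
  have mem : ∀ w, |w - c| ≤ r → c + |w - c| ∈ Icc c (c + r) := fun w hw =>
    ⟨le_add_of_nonneg_right (abs_nonneg _), add_le_add_right hw c⟩
  rw [fold u, fold v, hmono.lt_iff_lt (mem u hu) (mem v hv), add_lt_add_iff_left]

/-- The paper's `f_δ`. -/
noncomputable def pairMulLog (δ x : ℝ) : ℝ :=
  x * log x + (δ - x) * log (δ - x)

lemma pairMulLog_sub_eq_add (δ x : ℝ) :
    pairMulLog δ (δ / 2 - x) = pairMulLog δ (δ / 2 + x) := by
  unfold pairMulLog
  rw [show δ - (δ / 2 - x) = δ / 2 + x by ring, show δ - (δ / 2 + x) = δ / 2 - x by ring]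
  ring

lemma continuous_pairMulLog (δ : ℝ) : Continuous (pairMulLog δ) :=
  continuous_mul_log.add (continuous_mul_log.comp (continuous_const.sub continuous_id))

lemma hasDerivAt_pairMulLog {δ x : ℝ} (hx : 0 < x) (hxδ : x < δ) :
    HasDerivAt (pairMulLog δ) (log x - log (δ - x)) x := by
  have hright : HasDerivAt (fun y => (δ - y) * log (δ - y)) ((log (δ - x) + 1) * (0 - 1)) x :=
    (hasDerivAt_mul_log (sub_pos.2 hxδ).ne').comp x ((hasDerivAt_const x δ).sub (hasDerivAt_id x))
  exact ((hasDerivAt_mul_log hx.ne').add hright).congr_deriv (by ring)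

lemma strictMonoOn_pairMulLog (δ : ℝ) : StrictMonoOn (pairMulLog δ) (Icc (δ / 2) δ) := by
  refine strictMonoOn_of_deriv_pos (convex_Icc _ _) (continuous_pairMulLog δ).continuousOn ?_
  rw [interior_Icc]
  rintro x ⟨hx, hxδ⟩
  have hx0 : 0 < x := by linarith
  rw [(hasDerivAt_pairMulLog hx0 hxδ).deriv, sub_pos]
  exact log_lt_log (sub_pos.2 hxδ) (by linarith)

lemma pairMulLog_lt_iff {δ u v : ℝ} (hu₀ : 0 ≤ u) (huδ : u ≤ δ) (hv₀ : 0 ≤ v) (hvδ : v ≤ δ) :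
    pairMulLog δ u < pairMulLog δ v ↔ |u - δ / 2| < |v - δ / 2| := by
  have hmono : StrictMonoOn (pairMulLog δ) (Icc (δ / 2) (δ / 2 + δ / 2)) := by
    simpa only [add_halves] using strictMonoOn_pairMulLog δ
  exact lt_iff_abs_sub_lt_of_symm_of_strictMonoOn (pairMulLog_sub_eq_add δ) hmono
    (abs_sub_le_iff.2 ⟨by linarith, by linarith⟩) (abs_sub_le_iff.2 ⟨by linarith, by linarith⟩)

theorem stmt7_general
    (α β δ : ℝ)
    (hα : α ∈ Set.Ioo (0:ℝ) 1) (hβ : β ∈ Set.Ioo (0:ℝ) 1)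
    (hβα : β < α) (hαδ : α ≤ δ) :
    Hent α β δ 0 - Hent α β δ β
        = ((α - β) * Real.log (α - β) + (δ - (α - β)) * Real.log (δ - (α - β)))
          - (α * Real.log α + (δ - α) * Real.log (δ - α)) ∧
    (Hent α β δ 0 < Hent α β δ β ↔ |α - δ / 2| > |α - β - δ / 2|) := by
  have hdiff : Hent α β δ 0 - Hent α β δ β = pairMulLog δ (α - β) - pairMulLog δ α := by
    simp only [Hent, pairMulLog, sub_zero, add_zero, sub_self, zero_mul]
    rw [show δ - α + β = δ - (α - β) by ring]
    ring
  refine ⟨hdiff, ?_⟩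
  rw [gt_iff_lt, ← sub_neg, hdiff, sub_neg]
  exact pairMulLog_lt_iff (by linarith) (by linarith [hβ.1]) hα.1.le hαδ

/-- Case 2: `β < α`, `δ ≥ α`, endpoints `x₁ = 0`, `x₂ = β`.
Then `H(0) − H(β) = f_δ(α−β) − f_δ(α)` where `f_δ(x) = x log x + (δ−x) log(δ−x)`,
and `H(0) < H(β)` iff `|α − δ/2| > |α − β − δ/2|`. -/
theorem stmt7
    (α β δ : ℝ)
    (hα : α ∈ Set.Ioo (0:ℝ) 1) (hβ : β ∈ Set.Ioo (0:ℝ) 1) (hδ : δ ∈ Set.Ioo (0:ℝ) 1)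
    (hβα : β < α) (hαδ : α ≤ δ) (hδ1 : δ ≤ 1 - β) :
    Hent α β δ 0 - Hent α β δ β
        = ((α - β) * Real.log (α - β) + (δ - (α - β)) * Real.log (δ - (α - β)))
          - (α * Real.log α + (δ - α) * Real.log (δ - α)) ∧
    (Hent α β δ 0 < Hent α β δ β ↔ |α - δ / 2| > |α - β - δ / 2|) :=
  stmt7_general α β δ hα hβ hβα hαδ
end

section
/- Define x̂(α, β, δ) = max{0, α − δ} if |δ − α| < |β − α|, and x̂(α, β, δ) = min{α, β} otherwise. For any α, β, δ ≥ 0 with α − β ≤ δ ≤ 1 − β and max{0, α−δ} ≤ min{α,β}, and for any x ∈ [max{0, α − δ}, min{α, β}], the entropy H(x) = −x log x − (α − x) log(α − x) − (β − x) log(β − x) − (δ − α + x) log(δ − α + x) satisfies H(x̂(α,β,δ)) ≤ H(x). -/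
/-- The minimizing choice `x̂(α, β, δ)`. -/
noncomputable def xhat (α β δ : ℝ) : ℝ :=
  if |δ - α| < |β - α| then max 0 (α - δ) else min α β

open Real Set

theorem ConcaveOn.comp_const_sub {s : Set ℝ} {f : ℝ → ℝ} (hf : ConcaveOn ℝ s f) (c : ℝ) :
    ConcaveOn ℝ ((c - ·) ⁻¹' s) (fun x => f (c - x)) :=
  hf.comp_affineMap (AffineMap.const ℝ ℝ c - AffineMap.id ℝ ℝ)

theorem ConcaveOn.comp_const_add {s : Set ℝ} {f : ℝ → ℝ} (hf : ConcaveOn ℝ s f) (c : ℝ) :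
    ConcaveOn ℝ ((c + ·) ⁻¹' s) (fun x => f (c + x)) :=
  hf.translate_right c

theorem negMulLog_add_negMulLog_le_of_sum_eq {s t u v : ℝ} (hs : 0 ≤ s) (hst : s ≤ t)
    (hsu : s ≤ u) (hsum : s + v = t + u) :
    negMulLog s + negMulLog v ≤ negMulLog t + negMulLog u := by
  set c := s + v
  have hconc : ConcaveOn ℝ (Icc 0 c) fun x => negMulLog x + negMulLog (c - x) :=
    (concaveOn_negMulLog.subset (fun x hx => hx.1) (convex_Icc 0 c)).add
      ((concaveOn_negMulLog.comp_const_sub c).subset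
        (fun x hx => sub_nonneg.2 hx.2) (convex_Icc 0 c))
  -- `x ↦ negMulLog x + negMulLog (c - x)` takes the same value at `s` and at `v = c - s`.
  have hmin := hconc.min_le_of_mem_Icc (x := s) (y := v) (z := t)
    ⟨hs, by linarith⟩ ⟨by linarith, by linarith⟩ ⟨hst, by linarith⟩
  simpa only [c, add_sub_cancel_left, add_sub_cancel_right, show s + v - t = u by linarith,
    add_comm (negMulLog v), min_self] using hmin

section Entropy

variable (α β δ : ℝ)

theorem Hent_eq_negMulLog (x : ℝ) :
    Hent α β δ x = negMulLog x + negMulLog (α - x) + negMulLog (β - x)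
      + negMulLog (δ - α + x) := by
  simp only [Hent, negMulLog]; ring

theorem concaveOn_Hent : ConcaveOn ℝ (Icc (max 0 (α - δ)) (min α β)) (Hent α β δ) := by
  have restrict {t : Set ℝ} {g : ℝ → ℝ} (hg : ConcaveOn ℝ t g)
      (ht : ∀ x ∈ Icc (max 0 (α - δ)) (min α β), x ∈ t) :
      ConcaveOn ℝ (Icc (max 0 (α - δ)) (min α β)) g :=
    hg.subset ht (convex_Icc _ _)
  rw [funext (Hent_eq_negMulLog α β δ)]
  refine (((restrict concaveOn_negMulLog ?_).add
    (restrict (concaveOn_negMulLog.comp_const_sub α) ?_)).add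
    (restrict (concaveOn_negMulLog.comp_const_sub β) ?_)).add
    (restrict (concaveOn_negMulLog.comp_const_add (δ - α)) ?_) <;>
  · intro x ⟨hlo, hhi⟩
    simp only [max_le_iff, le_min_iff] at hlo hhi
    simp only [mem_preimage, mem_Ici]
    linarith

theorem Hent_zero : Hent α β δ 0 = negMulLog α + negMulLog β + negMulLog (δ - α) := by
  simp only [Hent_eq_negMulLog, negMulLog_zero, sub_zero, add_zero, zero_add]

theorem Hent_first_sub_third :
    Hent α β δ (α - δ) = negMulLog (α - δ) + negMulLog δ + negMulLog (β - α + δ) := by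
  rw [Hent_eq_negMulLog, sub_sub_cancel, sub_add_sub_cancel', sub_self, negMulLog_zero, add_zero,
    sub_sub_eq_add_sub, add_sub_right_comm]

theorem Hent_first : Hent α β δ α = negMulLog α + negMulLog (β - α) + negMulLog δ := by
  rw [Hent_eq_negMulLog, sub_self, negMulLog_zero, add_zero, sub_add_cancel]

theorem Hent_second : Hent α β δ β = negMulLog β + negMulLog (α - β) + negMulLog (β - α + δ) := by
  rw [Hent_eq_negMulLog, sub_self, negMulLog_zero, add_zero,
    show δ - α + β = β - α + δ by ring]

theorem Hent_endpoints_le (h : max 0 (α - δ) ≤ min α β) :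
    (|δ - α| ≤ |β - α| → Hent α β δ (max 0 (α - δ)) ≤ Hent α β δ (min α β)) ∧
      (|β - α| ≤ |δ - α| → Hent α β δ (min α β) ≤ Hent α β δ (max 0 (α - δ))) := by
  simp only [max_le_iff, le_min_iff] at h
  obtain ⟨⟨hα, hβ⟩, hδ, hαδβ⟩ := h
  rcases le_total δ α with hδα | hαδ <;> rcases le_total β α with hβα | hαβ
  · rw [max_eq_right (sub_nonneg.2 hδα), min_eq_right hβα, Hent_first_sub_third, Hent_second,
      abs_of_nonpos (sub_nonpos.2 hδα), abs_of_nonpos (sub_nonpos.2 hβα)]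
    refine ⟨fun hc => ?_, fun hc => ?_⟩
    · linarith [negMulLog_add_negMulLog_le_of_sum_eq (s := α - δ) (v := δ) (t := β) (u := α - β)
        (by linarith) hαδβ (by linarith) (by ring)]
    · linarith [negMulLog_add_negMulLog_le_of_sum_eq (s := α - β) (v := β) (t := α - δ) (u := δ)
        (by linarith) (by linarith) (by linarith) (by ring)]
  · rw [max_eq_right (sub_nonneg.2 hδα), min_eq_left hαβ, Hent_first_sub_third, Hent_first,
      abs_of_nonpos (sub_nonpos.2 hδα), abs_of_nonneg (sub_nonneg.2 hαβ)]
    refine ⟨fun hc => ?_, fun hc => ?_⟩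
    · linarith [negMulLog_add_negMulLog_le_of_sum_eq (s := α - δ) (v := β - α + δ) (t := α)
        (u := β - α) (by linarith) (by linarith) (by linarith) (by ring)]
    · linarith [negMulLog_add_negMulLog_le_of_sum_eq (s := β - α) (v := α) (t := α - δ)
        (u := β - α + δ) (by linarith) (by linarith) (by linarith) (by ring)]
  · rw [max_eq_left (sub_nonpos.2 hαδ), min_eq_right hβα, Hent_zero, Hent_second,
      abs_of_nonneg (sub_nonneg.2 hαδ), abs_of_nonpos (sub_nonpos.2 hβα)]
    refine ⟨fun hc => ?_, fun hc => ?_⟩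
    · linarith [negMulLog_add_negMulLog_le_of_sum_eq (s := δ - α) (v := α) (t := α - β)
        (u := β - α + δ) (by linarith) (by linarith) (by linarith) (by ring)]
    · linarith [negMulLog_add_negMulLog_le_of_sum_eq (s := α - β) (v := β - α + δ) (t := α)
        (u := δ - α) (by linarith) (by linarith) (by linarith) (by ring)]
  · rw [max_eq_left (sub_nonpos.2 hαδ), min_eq_left hαβ, Hent_zero, Hent_first,
      abs_of_nonneg (sub_nonneg.2 hαδ), abs_of_nonneg (sub_nonneg.2 hαβ)]
    refine ⟨fun hc => ?_, fun hc => ?_⟩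
    · linarith [negMulLog_add_negMulLog_le_of_sum_eq (s := δ - α) (v := β) (t := β - α) (u := δ)
        (by linarith) (by linarith) (by linarith) (by ring)]
    · linarith [negMulLog_add_negMulLog_le_of_sum_eq (s := β - α) (v := δ) (t := β) (u := δ - α)
        (by linarith) (by linarith) (by linarith) (by ring)]

end Entropy

theorem stmt10_general
    (α β δ : ℝ)
    (hint : max 0 (α - δ) ≤ min α β) :
    ∀ x ∈ Set.Icc (max 0 (α - δ)) (min α β),
      Hent α β δ (xhat α β δ) ≤ Hent α β δ x := by
  intro x hx
  have hmin := (concaveOn_Hent α β δ).min_le_of_mem_Icc (left_mem_Icc.2 hint)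
    (right_mem_Icc.2 hint) hx
  obtain ⟨hleft, hright⟩ := Hent_endpoints_le α β δ hint
  unfold xhat
  split_ifs with hc
  · exact (le_min le_rfl (hleft hc.le)).trans hmin
  · exact (le_min (hright (not_lt.1 hc)) le_rfl).trans hmin

/-- For admissible `(α, β, δ)` and any
`x ∈ [max {0, α−δ}, min {α, β}]`, `H(x̂(α, β, δ)) ≤ H(x)`. -/
theorem stmt10
    (α β δ : ℝ)
    (hα : α ∈ Set.Icc (0:ℝ) 1) (hβ : β ∈ Set.Icc (0:ℝ) 1) (hδ : δ ∈ Set.Icc (0:ℝ) 1)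
    (h1 : α - β ≤ δ) (h2 : δ ≤ 1 - β)
    (hint : max 0 (α - δ) ≤ min α β) :
    ∀ x ∈ Set.Icc (max 0 (α - δ)) (min α β),
      Hent α β δ (xhat α β δ) ≤ Hent α β δ x :=
  stmt10_general α β δ hint
end

section
/- If Q is a shift-invariant 2-block probability assignment with Q(00)+Q(01)+Q(10)+Q(11)=1 and Q(01)=Q(10), then the order-2 minimal entropy extension gives Q̂(0000) = Q(00), Q̂(0101) = Q(01), Q̂(1010) = Q(10), Q̂(1111) = Q(11), and Q̂(a₁a₂a₃a₄) = 0 for all other 4-blocks a₁a₂a₃a₄. -/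
/-- `Υ(α, β, δ)` from the minimal entropy extension. -/
noncomputable def Ups (α β δ : ℝ) : ℝ :=
  if |δ - α| < |β - α| then max 0 (α - δ) else min α β

/-- `Υ_{c,d}(α, β, δ)` (`false` = symbol 0, `true` = symbol 1). -/
noncomputable def UpsE (c d : Bool) (α β δ : ℝ) : ℝ :=
  match c, d with
  | false, false => Ups α β δ
  | false, true  => α - Ups α β δ
  | true,  false => β - Ups α β δ
  | true,  true  => δ - α + Ups α β δ

/-- Order-2 minimal entropy extension to 3-blocks:
`Q̂(c y d) = Υ_{c,d}(Q(0y), Q(y0), Q(y1))`. -/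
noncomputable def Qhat3 (Q : List Bool → ℝ) (c y d : Bool) : ℝ :=
  UpsE c d (Q [false, y]) (Q [y, false]) (Q [y, true])

/-- Order-2 minimal entropy extension to 4-blocks:
`Q̂(a₁a₂a₃a₄) = Υ_{a₁,a₄}(Q̂(0a₂a₃), Q̂(a₂a₃0), Q̂(a₂a₃1))`. -/
noncomputable def Qhat4 (Q : List Bool → ℝ) (a₁ a₂ a₃ a₄ : Bool) : ℝ :=
  UpsE a₁ a₄ (Qhat3 Q false a₂ a₃) (Qhat3 Q a₂ a₃ false) (Qhat3 Q a₂ a₃ true)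

lemma Ups_self (a c : ℝ) : Ups a a c = a := by
  have : ¬ |c - a| < |a - a| := by simp [sub_self]
  simp [Ups, this]

lemma Ups_zero (b : ℝ) : Ups 0 b 0 = 0 := by
  unfold Ups
  split
  · simp
  · rename_i h
    simp only [sub_zero, abs_zero] at h
    have : b = 0 := abs_eq_zero.1 (le_antisymm (not_lt.1 h) (abs_nonneg _))
    simp [this]

lemma Ups_mid (a : ℝ) : Ups a 0 a = 0 := by
  unfold Ups
  split
  · simp
  · rename_i h
    simp only [sub_self, abs_zero, zero_sub, abs_neg] at h
    have : a = 0 := abs_eq_zero.1 (le_antisymm (not_lt.1 h) (abs_nonneg _))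
    simp [this]

/-- If `Q` is a consistent shift-invariant 2-block probability
assignment with `Q(01) = Q(10)`, the order-2 minimal entropy extension gives
`Q̂(0000) = Q(00)`, `Q̂(0101) = Q(01)`, `Q̂(1010) = Q(10)`, `Q̂(1111) = Q(11)`,
and `Q̂(a₁a₂a₃a₄) = 0` for all other 4-blocks. -/
theorem stmt16
    (Q : List Bool → ℝ)
    (hnonneg : ∀ b, 0 ≤ Q b)
    (hone : Q [false] + Q [true] = 1)
    (hright : ∀ b : List Bool, b.length ≤ 1 →
      Q b = Q (b ++ [false]) + Q (b ++ [true]))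
    (hleft : ∀ b : List Bool, b.length ≤ 1 →
      Q b = Q (false :: b) + Q (true :: b))
    (hsym : Q [false, true] = Q [true, false]) :
    Qhat4 Q false false false false = Q [false, false] ∧
    Qhat4 Q false true false true = Q [false, true] ∧
    Qhat4 Q true false true false = Q [true, false] ∧
    Qhat4 Q true true true true = Q [true, true] ∧
    (∀ a₁ a₂ a₃ a₄ : Bool, ¬(a₃ = a₁ ∧ a₄ = a₂) → Qhat4 Q a₁ a₂ a₃ a₄ = 0) := by

  have h3 : ∀ c y d, Qhat3 Q c y d =
      if y = false then
        (if c = false ∧ d = false then Q [false, false]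
         else if c = true ∧ d = true then Q [false, true] else 0)
      else
        (if c = false ∧ d = false then Q [false, true]
         else if c = true ∧ d = true then Q [true, true] else 0) := by
    intro c y d
    cases c <;> cases y <;> cases d <;>
      simp [Qhat3, UpsE, Ups_self, ← hsym] <;> ring
  have key : ∀ a₁ a₂ a₃ a₄, Qhat4 Q a₁ a₂ a₃ a₄ =
      if a₃ = a₁ ∧ a₄ = a₂ then Q [a₁, a₂] else 0 := by
    intro a₁ a₂ a₃ a₄
    cases a₁ <;> cases a₂ <;> cases a₃ <;> cases a₄ <;>
      simp only [Qhat4, h3, UpsE] <;>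
      simp [Ups_self, Ups_zero, Ups_mid, ← hsym] <;> ring
  refine ⟨by simp [key], by simp [key], by simp [key], by simp [key], ?_⟩
  intro a₁ a₂ a₃ a₄ h
  simp [key, h]
end

section
/- The order-2 minimal entropy map for elementary CA rule 26 sends any consistent 2-block probability vector (Q(00), Q(01), Q(10), Q(11)) with Q(01) = Q(10) and total sum 1 to the fixed point (1, 0, 0, 0) in a single iteration. -/
/-- Local rule of elementary CA rule 26:
`w(1|001) = w(1|011) = w(1|100) = 1`, all other transitions yield 0. -/
def rule26 (x y z : Bool) : Bool :=
  match x, y, z with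
  | false, false, true => true
  | false, true,  true => true
  | true,  false, false => true
  | _, _, _ => false

/-- Deterministic local transition probabilities of rule 26. -/
noncomputable def w26 (b x y z : Bool) : ℝ := if b = rule26 x y z then 1 else 0

/-- The order-2 minimal entropy map for rule 26:
`Q'(b₁b₂) = Σ_{a∈{0,1}⁴} w(b₁|a₁a₂a₃) w(b₂|a₂a₃a₄) Q̂(a₁a₂a₃a₄)`. -/
noncomputable def minEntMap26 (Q : List Bool → ℝ) (b₁ b₂ : Bool) : ℝ :=
  ∑ a : Bool × Bool × Bool × Bool,
    w26 b₁ a.1 a.2.1 a.2.2.1 * w26 b₂ a.2.1 a.2.2.1 a.2.2.2 *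
      Qhat4 Q a.1 a.2.1 a.2.2.1 a.2.2.2

/-!
When `Q(01) = Q(10)`, every `Υ` in the order-2 extension is evaluated either with two equal
first arguments or at `Υ(α, β, α)` with `min(α, β) = 0`, where it vanishes; so `Q̂` puts all its
mass on period-2 blocks: `Q̂(cyd) = [c = d] Q(cy)` and `Q̂(a₁a₂a₃a₄) = [a₁ = a₃ ∧ a₂ = a₄] Q(a₁a₂)`.
Rule 26 sends every pattern `xyx` to `0`, so the whole mass `Σ Q(ab) = 1` lands on `00`.
-/

lemma Ups_self_s17 (α δ : ℝ) : Ups α α δ = α := by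
  rw [Ups, sub_self, abs_zero, if_neg (not_lt.mpr (abs_nonneg _)), min_self]

lemma Ups_of_min_eq_zero {α β : ℝ} (hm : min α β = 0) : Ups α β α = 0 := by
  rw [Ups, sub_self, abs_zero]
  split_ifs
  · exact max_self 0
  · exact hm

section Symmetric

variable {Q : List Bool → ℝ}

lemma Qhat3_of_symm (hsym : Q [false, true] = Q [true, false]) (c y d : Bool) :
    Qhat3 Q c y d = if c = d then Q [c, y] else 0 := by
  cases c <;> cases y <;> cases d <;> simp [Qhat3, UpsE, Ups_self_s17, hsym]

lemma Qhat4_of_symm (hsym : Q [false, true] = Q [true, false]) (h10 : 0 ≤ Q [true, false])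
    (a₁ a₂ a₃ a₄ : Bool) :
    Qhat4 Q a₁ a₂ a₃ a₄ = if a₁ = a₃ ∧ a₂ = a₄ then Q [a₁, a₂] else 0 := by
  cases a₂ <;> cases a₃ <;> cases a₁ <;> cases a₄ <;>
    simp [Qhat4, UpsE, Qhat3_of_symm hsym, Ups_self_s17, hsym,
      Ups_of_min_eq_zero (min_eq_left h10), Ups_of_min_eq_zero (min_eq_right h10)]

lemma minEntMap26_of_symm (hsym : Q [false, true] = Q [true, false])
    (h10 : 0 ≤ Q [true, false]) (b₁ b₂ : Bool) :
    minEntMap26 Q b₁ b₂ = if b₁ = false ∧ b₂ = false then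
      Q [false, false] + Q [false, true] + Q [true, false] + Q [true, true] else 0 := by
  cases b₁ <;> cases b₂ <;>
    simp [minEntMap26, Qhat4_of_symm hsym h10, Fintype.sum_prod_type, w26, rule26]
  ring

end Symmetric

theorem stmt17_general
    (Q : List Bool → ℝ)
    (hnonneg : ∀ b, 0 ≤ Q b)
    (hsym : Q [false, true] = Q [true, false])
    (hsum : Q [false, false] + Q [false, true] + Q [true, false] +
      Q [true, true] = 1) :
    minEntMap26 Q false false = 1 ∧ minEntMap26 Q false true = 0 ∧
    minEntMap26 Q true false = 0 ∧ minEntMap26 Q true true = 0 := by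
  simp only [minEntMap26_of_symm hsym (hnonneg _)]
  simp [hsum]

/-- The order-2 minimal entropy map for rule 26 sends any
consistent 2-block probability vector with `Q(01) = Q(10)` and total sum 1
to the fixed point `(1, 0, 0, 0)` in a single iteration. -/
theorem stmt17
    (Q : List Bool → ℝ)
    (hnonneg : ∀ b, 0 ≤ Q b)
    (hone : Q [false] + Q [true] = 1)
    (hright : ∀ b : List Bool, b.length ≤ 1 →
      Q b = Q (b ++ [false]) + Q (b ++ [true]))
    (hleft : ∀ b : List Bool, b.length ≤ 1 →
      Q b = Q (false :: b) + Q (true :: b))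
    (hsym : Q [false, true] = Q [true, false])
    (hsum : Q [false, false] + Q [false, true] + Q [true, false] +
      Q [true, true] = 1) :
    minEntMap26 Q false false = 1 ∧ minEntMap26 Q false true = 0 ∧
    minEntMap26 Q true false = 0 ∧ minEntMap26 Q true true = 0 :=
  stmt17_general Q hnonneg hsym hsum
end

section
/- Let F be a cellular automaton of radius r and Ψ^(k) the order-k minimal entropy operator. For positive integers k, n and block b with k ≥ |b| + 2nr, F^n μ([b]) = (Ψ^(k) F Ψ^(k))^n μ([b]) for every shift-invariant measure μ. -/
/-- Action of a probabilistic cellular automaton of radius `r` with local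
transition function `w` on block probabilities:
`(F P)(b) = Σ_{a ∈ {0,1}^{|b|+2r}} (Π_j w(b_j | a_j … a_{j+2r})) P(a)`. -/
noncomputable def caStep (r : ℕ) (w : Bool → (Fin (2 * r + 1) → Bool) → ℝ)
    (P : List Bool → ℝ) : List Bool → ℝ := fun b =>
  ∑ a : Fin (b.length + 2 * r) → Bool,
    (∏ j : Fin b.length,
        w (b.get j)
          (fun i : Fin (2 * r + 1) =>
            a ⟨j.val + i.val, by have := j.isLt; have := i.isLt; omega⟩)) *
      P (List.ofFn a)

/-!
`(F P)(b)` only reads `P` on blocks of length `|b| + 2r`, so `(F^n P)(b)` only reads `P` on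
blocks of length at most `|b| + 2nr ≤ k`, where `Ψ^(k)` changes nothing. Inducting on `n`,
the outer `Ψ` is invisible at `b`, the inner one at the blocks of length `|b| + 2r` that `F`
reads, and there the induction hypothesis applies.
-/

def HasRadius {α β : Type*} (G : (List α → β) → List α → β) (r : ℕ) : Prop :=
  ∀ Q₁ Q₂ b, (∀ a : List α, a.length = b.length + 2 * r → Q₁ a = Q₂ a) → G Q₁ b = G Q₂ b

lemma caStep_hasRadius (r : ℕ) (w : Bool → (Fin (2 * r + 1) → Bool) → ℝ) :
    HasRadius (caStep r w) r := fun _ _ _ h =>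
  Finset.sum_congr rfl fun a _ => by rw [h (List.ofFn a) (by simp)]

theorem HasRadius.iterate_apply_eq {α β : Type*} {G Psi : (List α → β) → List α → β}
    {r k : ℕ} (hG : HasRadius G r) (hPsi : ∀ Q a, a.length ≤ k → Psi Q a = Q a)
    (n : ℕ) (P : List α → β) (b : List α) (hb : b.length + 2 * n * r ≤ k) :
    G^[n] P b = (fun Q => Psi (G (Psi Q)))^[n] P b := by
  induction n generalizing b with
  | zero => rfl
  | succ n ih =>
    have hstep : 2 * (n + 1) * r = 2 * n * r + 2 * r := by ring
    rw [Function.iterate_succ_apply', Function.iterate_succ_apply', hPsi _ b (by omega)]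
    refine hG _ _ b fun a ha => ?_
    rw [hPsi _ a (by omega)]
    exact ih a (by omega)

theorem stmt19_general
    (r k n : ℕ)
    (w : Bool → (Fin (2 * r + 1) → Bool) → ℝ)
    (Psi : (List Bool → ℝ) → (List Bool → ℝ))
    (hPsi : ∀ Q : List Bool → ℝ, ∀ a : List Bool, a.length ≤ k → Psi Q a = Q a)
    (P : List Bool → ℝ) :
    ∀ b : List Bool, b.length + 2 * n * r ≤ k →
      (caStep r w)^[n] P b = (fun Q => Psi (caStep r w (Psi Q)))^[n] P b :=
  (caStep_hasRadius r w).iterate_apply_eq hPsi n P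

/-- Let `F` be a CA of radius `r` and `Ψ = Ψ^(k)` the order-`k`
minimal entropy operator (preserving probabilities of all blocks of length
≤ `k`). For positive integers `k`, `n` and block `b` with `k ≥ |b| + 2nr`,
`(F^n P)(b) = ((Ψ ∘ F ∘ Ψ)^n P)(b)` for every shift-invariant measure given
by block probabilities `P`. -/
theorem stmt19
    (r k n : ℕ) (hk : 0 < k) (hn : 0 < n)
    (w : Bool → (Fin (2 * r + 1) → Bool) → ℝ)
    (hw0 : ∀ b c, 0 ≤ w b c)
    (hw1 : ∀ c, w false c + w true c = 1)
    (Psi : (List Bool → ℝ) → (List Bool → ℝ))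
    (hPsi : ∀ Q : List Bool → ℝ, ∀ a : List Bool, a.length ≤ k → Psi Q a = Q a)
    (P : List Bool → ℝ)
    (hnonneg : ∀ b, 0 ≤ P b)
    (hone : P [false] + P [true] = 1)
    (hright : ∀ b, P b = P (b ++ [false]) + P (b ++ [true]))
    (hleft : ∀ b, P b = P (false :: b) + P (true :: b)) :
    ∀ b : List Bool, b.length + 2 * n * r ≤ k →
      (caStep r w)^[n] P b = (fun Q => Psi (caStep r w (Psi Q)))^[n] P b :=
  stmt19_general r k n w Psi hPsi P
end
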